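/- arXiv:2501.11486 — 2 statements merged into one kernel-verified Lean document; each statement's English description precedes it below -/
import Mathlib

section
/- Let G be a finite group and x ∈ G. Then either N_G(⟨x⟩) = Sol_G(x), or |Sol_G(x)| > ℓ·|x|, where ℓ is the minimum of the indices |⟨x⟩ : ⟨x⟩ ∩ ⟨x⟩^y| taken over all y ∉ N_G(⟨x⟩). -/
def solubilizer (G : Type*) [Group G] (x : G) : Set G :=
  {y | IsSolvable ↥(Subgroup.closure {x, y})}

/-!
If `y` normalizes `⟨x⟩`, then `⟨x, y⟩ = ⟨y⟩⟨x⟩` is cyclic-by-cyclic, so `N_G(⟨x⟩) ⊆ Sol_G(x)`.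
If the inclusion is proper, pick `y ∈ Sol_G(x) \ N_G(⟨x⟩)`. The double coset `⟨x⟩ y ⟨x⟩` lies in
`⟨x, y⟩`, hence in `Sol_G(x)`, and is disjoint from `⟨x⟩`. By orbit–stabilizer for `⟨x⟩` acting on
`G ⧸ ⟨x⟩` it has `|x| · |⟨x⟩ : ⟨x⟩ ∩ ⟨x⟩^{y⁻¹}| ≥ ℓ |x|` elements, so `|Sol_G(x)| ≥ |x| + ℓ |x|`.
-/

open Subgroup DoubleCoset
open scoped Pointwise

section

variable {G : Type*} [Group G]

theorem isSolvable_sup_of_le_normalizer {H N : Subgroup G} (hLE : H ≤ normalizer (N : Set G))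
    [Group.IsSolvable H] [Group.IsSolvable N] : Group.IsSolvable (H ⊔ N : Subgroup G) := by
  have := normal_subgroupOf_of_le_normalizer hLE
  have := normal_subgroupOf_sup_of_le_normalizer hLE
  rw [Group.isSolvable_iff_subgroup_quotient (N.subgroupOf (H ⊔ N))]
  let e := subgroupOfEquivOfLe (le_sup_right : N ≤ H ⊔ N)
  let q := QuotientGroup.quotientInfEquivProdNormalizerQuotient H N hLE
  exact ⟨Group.isSolvable_of_isSolvable_injective (f := e.toMonoidHom) e.injective,
    Group.isSolvable_of_surjective (f := q.toMonoidHom) q.surjective⟩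

theorem isSolvable_closure_pair_of_mem_normalizer {x y : G}
    (hy : y ∈ normalizer (zpowers x : Set G)) : Group.IsSolvable (closure {x, y}) := by
  have : closure {x, y} = zpowers y ⊔ zpowers x := by
    rw [Set.insert_eq, Subgroup.closure_union, sup_comm, zpowers_eq_closure, zpowers_eq_closure]
  rw [this]
  have := Group.isSolvable_of_comm (G := zpowers x) mul_comm'
  have := Group.isSolvable_of_comm (G := zpowers y) mul_comm'
  exact isSolvable_sup_of_le_normalizer (zpowers_le.mpr hy)

theorem normalizer_subset_solubilizer (x : G) :
    (normalizer (zpowers x : Set G) : Set G) ⊆ solubilizer G x :=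
  fun _ hy => isSolvable_closure_pair_of_mem_normalizer hy

theorem mem_solubilizer_of_mem_closure {x y z : G} (hy : y ∈ solubilizer G x)
    (hz : z ∈ closure {x, y}) : z ∈ solubilizer G x := by
  have hle : closure {x, z} ≤ closure {x, y} := by
    rw [closure_le, Set.insert_subset_iff, Set.singleton_subset_iff]
    exact ⟨subset_closure (by simp), hz⟩
  have : Group.IsSolvable (closure {x, y}) := hy
  exact Group.isSolvable_of_isSolvable_injective (inclusion_injective hle)

theorem doubleCoset_subset_solubilizer {x y : G} (hy : y ∈ solubilizer G x) :
    doubleCoset y (zpowers x : Set G) (zpowers x) ⊆ solubilizer G x := by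
  intro z hz
  obtain ⟨a, ha, b, hb, rfl⟩ := mem_doubleCoset.mp hz
  have hA : zpowers x ≤ closure {x, y} := zpowers_le.mpr (subset_closure (by simp))
  refine mem_solubilizer_of_mem_closure hy (mul_mem (mul_mem (hA ha) ?_) (hA hb))
  exact subset_closure (by simp)

theorem conj_smul_zpowers (a x : G) : MulAut.conj a • zpowers x = zpowers (a * x * a⁻¹) := by
  rw [pointwise_smul_def]
  exact MonoidHom.map_zpowers (MulAut.conj a).toMonoidHom x

theorem stabilizer_coe_quotient (H K : Subgroup G) (a : G) :
    MulAction.stabilizer H (a : G ⧸ K) = (MulAut.conj a • K).subgroupOf H := by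
  ext h
  rw [MulAction.mem_stabilizer_iff, mem_subgroupOf, mem_pointwise_smul_iff_inv_smul_mem]
  change ((h * a : G) : G ⧸ K) = a ↔ _
  rw [QuotientGroup.eq, ← inv_mem_iff]
  simp [mul_assoc]

theorem image_coe_mul_singleton_eq_orbit (H K : Subgroup G) (a : G) :
    ((↑) '' ((H : Set G) * {a}) : Set (G ⧸ K)) = MulAction.orbit H (a : G ⧸ K) := by
  rw [Set.mul_singleton, Set.image_image]
  ext q
  constructor
  · rintro ⟨h, hh, rfl⟩
    exact ⟨⟨h, hh⟩, rfl⟩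
  · rintro ⟨h, rfl⟩
    exact ⟨h, h.2, rfl⟩

theorem card_doubleCoset (H K : Subgroup G) (a : G) :
    Nat.card (doubleCoset a (H : Set G) K) = Nat.card K * (MulAut.conj a • K).relIndex H := by
  rw [doubleCoset, card_mul_eq_card_subgroup_mul_card_quotient, image_coe_mul_singleton_eq_orbit,
    relIndex, ← stabilizer_coe_quotient, MulAction.index_stabilizer, Nat.card_coe_set_eq]

end

theorem stmt9 {G : Type*} [Group G] [Finite G] (x : G)
    (ℓ : ℕ)
    (hℓ : ℓ = sInf {n | ∃ y : G, y ∉ Subgroup.normalizer (Subgroup.zpowers x : Set G) ∧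
      n = (Subgroup.zpowers (y⁻¹ * x * y)).relIndex (Subgroup.zpowers x)}) :
    (Subgroup.normalizer (Subgroup.zpowers x : Set G) : Set G) = solubilizer G x ∨
      Nat.card (solubilizer G x) > ℓ * orderOf x := by
  refine or_iff_not_imp_left.mpr fun hne => ?_
  obtain ⟨y, hySol, hyN⟩ :=
    Set.exists_of_ssubset ((normalizer_subset_solubilizer x).ssubset_of_ne hne)
  set A := zpowers x
  have hℓ_le : ℓ ≤ (MulAut.conj y • A).relIndex A := by
    rw [hℓ, conj_smul_zpowers]
    exact Nat.sInf_le ⟨y⁻¹, fun h => hyN (by simpa using inv_mem h), by simp⟩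
  have hdisj : Disjoint (A : Set G) (doubleCoset y A A) := by
    refine Set.disjoint_left.mpr fun z hzA hz => hyN (le_normalizer ?_)
    obtain ⟨a, ha, b, hb, rfl⟩ := mem_doubleCoset.mp hz
    simpa [mul_assoc] using mul_mem (mul_mem (inv_mem ha) hzA) (inv_mem hb)
  calc ℓ * orderOf x < orderOf x + orderOf x * (MulAut.conj y • A).relIndex A := by
        nlinarith [orderOf_pos x]
    _ = Nat.card ((A : Set G) ∪ doubleCoset y A A : Set G) := by
        rw [Nat.card_coe_set_eq, Set.ncard_union_eq hdisj, ← Nat.card_coe_set_eq,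
          ← Nat.card_coe_set_eq, card_doubleCoset, SetLike.coe_sort_coe, Nat.card_zpowers]
    _ ≤ Nat.card (solubilizer G x) :=
        Nat.card_mono (Set.toFinite _)
          (Set.union_subset (fun _ hz => normalizer_subset_solubilizer x (le_normalizer hz))
            (doubleCoset_subset_solubilizer hySol))
end

section
/- The following are equivalent: (i) for every finite group G and every x ∈ G, |N_G(⟨x⟩)| divides |Sol_G(x)|; (ii) for every finite group G and every x ∈ G, the rational number (|C_G(x)| / |N_G(⟨x⟩)|) · ℓ_{C_G(x)} is an integer, where ℓ_{C_G(x)} is the number of orbits of C_G(x) acting by conjugation on Sol_G(x). -/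
noncomputable def numConjOrbits {G : Type*} [Group G] (S : Subgroup G) (T : Set G) : ℕ :=
  Nat.card {O : Set G // ∃ a ∈ T, O = {b | ∃ s ∈ S, b = s⁻¹ * a * s}}

/-
Write `N = N_G(⟨x⟩)`, `C = C_G(x)` and `S = Sol_G(x)`. Burnside's lemma for `C` acting on `S`
gives `ℓ · |C| = ∑_{c ∈ C} |S ∩ C_G(c)| = |S| + ∑_{1 ≠ c ∈ C} |S ∩ C_G(c)|`. The group `N`
permutes `C \ {1}` by conjugation, the summand is constant on its orbits, the stabiliser of `c` is
`N ∩ C_G(c) = N_{C_G(c)}(⟨x⟩)` and `S ∩ C_G(c) = Sol_{C_G(c)}(x)`. Hence, as soon as (i) holds in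
every `C_G(c)`, the class equation makes `|N|` divide the last sum, so `|N|` divides `ℓ · |C|`
iff it divides `|S|`. This gives (i) ⇒ (ii) directly, and (ii) ⇒ (i) by induction on `|G|`: if
`Z(G) = 1`, each `C_G(c)` with `c ≠ 1` is proper; otherwise (i) lifts from `G / Z(G)`, because
`Sol_G(x)` is the full preimage of `Sol_{G/Z(G)}(xZ(G))` (a central extension of a solvable group
is solvable) and `N` is the full preimage of a subgroup of `N_{G/Z(G)}(⟨xZ(G)⟩)`.
-/

open Subgroup MulAction

theorem MulAction.card_dvd_sum_of_card_stabilizer_dvd {K α : Type*} [Group K] [MulAction K α]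
    [Finite K] [Fintype α] {f : α → ℕ} (hf : ∀ (k : K) (a : α), f (k • a) = f a)
    (hdvd : ∀ a, Nat.card (stabilizer K a) ∣ f a) : Nat.card K ∣ ∑ a, f a := by
  classical
  rw [← Equiv.sum_comp (selfEquivSigmaOrbits K α).symm, Fintype.sum_sigma]
  refine Finset.dvd_sum fun ω _ => ?_
  have hconst (b : orbit K ω.out) : f ((selfEquivSigmaOrbits K α).symm ⟨ω, b⟩) = f ω.out := by
    obtain ⟨_, k, rfl⟩ := b
    exact hf k _
  rw [Fintype.sum_congr _ _ hconst, Finset.sum_const, Finset.card_univ, smul_eq_mul,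
    ← Nat.card_eq_fintype_card, Nat.card_coe_set_eq, ← index_stabilizer,
    ← card_mul_index (stabilizer K ω.out), mul_comm]
  exact mul_dvd_mul_left _ (hdvd _)

variable {G : Type*} [Group G]

abbrev Subgroup.conjActionOn (K : Subgroup G) (T : Set G)
    (hT : ∀ k ∈ K, ∀ t ∈ T, k * t * k⁻¹ ∈ T) : MulAction K T where
  smul k t := ⟨(k : G) * t * (k : G)⁻¹, hT k k.2 t t.2⟩
  one_smul t := Subtype.ext (show ((1 : K) : G) * t * ((1 : K) : G)⁻¹ = t by simp)
  mul_smul k l t := Subtype.ext (show ((k * l : K) : G) * t * ((k * l : K) : G)⁻¹ =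
    k * (l * t * (l : G)⁻¹) * (k : G)⁻¹ by simp [mul_assoc])

theorem Subgroup.card_subgroupOf (H K : Subgroup G) :
    Nat.card (H.subgroupOf K) = Nat.card ↥(H ⊓ K) := by
  rw [← inf_subgroupOf_right]
  exact Nat.card_congr (subgroupOfEquivOfLe inf_le_right).toEquiv

theorem Subgroup.card_dvd_sum_of_conj_invariant (K : Subgroup G) [Finite K] (s : Finset G)
    (hs : ∀ k ∈ K, ∀ g ∈ s, k * g * k⁻¹ ∈ s) (f : G → ℕ)
    (hf : ∀ k ∈ K, ∀ g ∈ s, f (k * g * k⁻¹) = f g)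
    (hdvd : ∀ g ∈ s, Nat.card ↥(K ⊓ centralizer {g}) ∣ f g) :
    Nat.card K ∣ ∑ g ∈ s, f g := by
  let := K.conjActionOn s hs
  rw [← Finset.sum_coe_sort s f]
  refine card_dvd_sum_of_card_stabilizer_dvd (fun k g => hf k k.2 g g.2) fun g => ?_
  have hstab : stabilizer K g = (centralizer {(g : G)}).subgroupOf K := by
    ext k
    rw [mem_stabilizer_iff, mem_subgroupOf, mem_centralizer_singleton_iff, Subtype.ext_iff]
    exact mul_inv_eq_iff_eq_mul
  rw [hstab, card_subgroupOf, inf_comm]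
  exact hdvd g g.2

theorem numConjOrbits_mul_card (K : Subgroup G) [Fintype K] (T : Set G) [Finite T]
    (hT : ∀ k ∈ K, ∀ t ∈ T, k * t * k⁻¹ ∈ T) :
    numConjOrbits K T * Nat.card K = ∑ k : K, Nat.card ↥(T ∩ centralizer {(k : G)}) := by
  classical
  let := K.conjActionOn T hT
  have := Fintype.ofFinite T
  have hsmul (k : K) (t : T) : ((k • t : T) : G) = k * t * (k : G)⁻¹ := rfl
  have horbit (t : T) : {b | ∃ s ∈ K, b = s⁻¹ * t * s} = Subtype.val '' orbit K t := by
    ext b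
    constructor
    · rintro ⟨s, hs, rfl⟩
      exact ⟨⟨s, hs⟩⁻¹ • t, mem_orbit _ _, by simp [hsmul]⟩
    · rintro ⟨_, ⟨k, rfl⟩, rfl⟩
      exact ⟨(k : G)⁻¹, inv_mem k.2, by simp [hsmul]⟩
  have hnum : numConjOrbits K T = Fintype.card (orbitRel.Quotient K T) := by
    let φ (t : T) : Set G := Subtype.val '' orbit K t
    have hker : ∀ t u : T, orbitRel K T t u ↔ φ t = φ u := fun t u => by
      rw [Set.image_eq_image Subtype.val_injective, orbit_eq_iff, orbitRel_apply]
    rw [← Nat.card_eq_fintype_card, Nat.card_congr ((Quotient.congr (Equiv.refl _) hker).trans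
      (Setoid.quotientKerEquivRange φ)), numConjOrbits]
    refine Nat.card_congr (Equiv.subtypeEquivRight fun O => ?_)
    simp only [Set.mem_range, φ, ← horbit, Subtype.exists, exists_prop, eq_comm]
  have hfixed (k : K) : Fintype.card (fixedBy T k) = Nat.card ↥(T ∩ centralizer {(k : G)}) := by
    rw [← Nat.card_eq_fintype_card]
    refine Nat.card_congr ((Equiv.subtypeEquivRight fun t => ?_).trans
      (Equiv.subtypeSubtypeEquivSubtypeInter (· ∈ T) (· ∈ centralizer {(k : G)})))
    rw [mem_fixedBy, Subtype.ext_iff, mem_centralizer_singleton_iff]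
    exact mul_inv_eq_iff_eq_mul.trans eq_comm
  rw [hnum, Nat.card_eq_fintype_card, ← sum_card_fixedBy_eq_card_orbits_mul_card_group]
  exact Fintype.sum_congr _ _ hfixed

theorem Subgroup.closure_pair (x y : G) : closure {x, y} = zpowers x ⊔ zpowers y := by
  rw [Set.insert_eq, closure_union, zpowers_eq_closure, zpowers_eq_closure]

theorem Group.isSolvable_of_isSolvable_map {G' : Type*} [Group G'] (f : G →* G')
    (hf : f.ker ≤ center G) (K : Subgroup G) [IsSolvable (K.map f)] : IsSolvable K :=
  have hcentral (a : (f.subgroupMap K).ker) : ((a : K) : G) ∈ center G :=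
    hf (congrArg Subtype.val (MonoidHom.mem_ker.mp a.2))
  have : IsSolvable (f.subgroupMap K).ker := isSolvable_of_comm fun a b =>
    Subtype.ext (Subtype.ext ((mem_center_iff.mp (hcentral a) b).symm))
  isSolvable_of_ker_le_range (f.subgroupMap K).ker.subtype (f.subgroupMap K)
    (by rw [range_subtype])

theorem mem_solubilizer {x y : G} :
    y ∈ solubilizer G x ↔ Group.IsSolvable (closure {x, y}) := Iff.rfl

theorem solubilizer_eq_of_zpowers_eq {x x' : G} (h : zpowers x = zpowers x') :
    solubilizer G x = solubilizer G x' := by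
  ext y
  rw [mem_solubilizer, mem_solubilizer, closure_pair, closure_pair, h]

theorem map_mem_solubilizer_iff {G' : Type*} [Group G'] (f : G →* G') (hf : f.ker ≤ center G)
    {x y : G} : f y ∈ solubilizer G' (f x) ↔ y ∈ solubilizer G x := by
  rw [mem_solubilizer, mem_solubilizer, ← Set.image_pair, ← MonoidHom.map_closure]
  exact ⟨fun _ => Group.isSolvable_of_isSolvable_map f hf _,
    fun _ => Group.isSolvable_of_surjective (f.subgroupMap_surjective _)⟩

theorem zpowers_conj_eq_of_mem_normalizer {x n : G} (hn : n ∈ normalizer (zpowers x : Set G)) :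
    zpowers (n * x * n⁻¹) = zpowers x := by
  rw [← mem_normalizer_iff_map_conj_eq.mp hn, MonoidHom.map_zpowers]
  rfl

theorem conj_mem_solubilizer_iff {x n y : G} (hn : n ∈ normalizer (zpowers x : Set G)) :
    n * y * n⁻¹ ∈ solubilizer G x ↔ y ∈ solubilizer G x := by
  have := map_mem_solubilizer_iff (MulAut.conj n).toMonoidHom (x := x) (y := y)
    (((MonoidHom.ker_eq_bot_iff _).mpr (MulAut.conj n).injective).trans_le bot_le)
  rwa [MulEquiv.coe_toMonoidHom, MulAut.conj_apply, MulAut.conj_apply,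
    solubilizer_eq_of_zpowers_eq (zpowers_conj_eq_of_mem_normalizer hn)] at this

theorem card_solubilizer_inter_centralizer_conj {x n : G}
    (hn : n ∈ normalizer (zpowers x : Set G)) (c : G) :
    Nat.card ↥(solubilizer G x ∩ centralizer {n * c * n⁻¹}) =
      Nat.card ↥(solubilizer G x ∩ centralizer {c}) := by
  refine Nat.card_congr ((MulAut.conj n).toEquiv.subtypeEquiv fun y => ?_).symm
  simp only [Set.mem_inter_iff, SetLike.mem_coe, mem_centralizer_singleton_iff,
    MulEquiv.toEquiv_eq_coe, EquivLike.coe_coe, MulAut.conj_apply, conj_mem_solubilizer_iff hn]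
  exact Iff.rfl.and (Commute.conj_iff n).symm

theorem card_solubilizer_subgroup {H : Subgroup G} {x : G} (hx : x ∈ H) :
    Nat.card (solubilizer H ⟨x, hx⟩) = Nat.card ↥(solubilizer G x ∩ H) := by
  have : solubilizer H ⟨x, hx⟩ = Subtype.val ⁻¹' solubilizer G x := by
    ext y
    exact (map_mem_solubilizer_iff H.subtype (by simp)).symm
  rw [this, ← Nat.card_image_of_injective Subtype.val_injective,
    Set.image_preimage_eq_inter_range, Subtype.range_coe_subtype]
  rfl

theorem card_normalizer_zpowers_subgroup {H : Subgroup G} {x : G} (hx : x ∈ H) :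
    Nat.card (normalizer (zpowers (⟨x, hx⟩ : H) : Set H)) =
      Nat.card ↥(normalizer (zpowers x : Set G) ⊓ H) := by
  have : zpowers (⟨x, hx⟩ : H) = (zpowers x).subgroupOf H := by
    rw [← comap_map_eq_self_of_injective H.subtype_injective (zpowers _), MonoidHom.map_zpowers]
    rfl
  rw [this, ← subgroupOf_normalizer_eq (zpowers_le.mpr hx), card_subgroupOf]

theorem centralizer_le_normalizer_zpowers (x : G) :
    centralizer {x} ≤ normalizer (zpowers x : Set G) := by
  rw [← centralizer_closure, ← zpowers_eq_closure]
  exact centralizer_le_normalizer _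

theorem conj_mem_centralizer_of_mem_normalizer {x n c : G}
    (hn : n ∈ normalizer (zpowers x : Set G)) (hc : c ∈ centralizer {x}) :
    n * c * n⁻¹ ∈ centralizer {x} := by
  obtain ⟨k, hk⟩ := mem_zpowers_iff.mp ((mem_normalizer_iff''.mp hn x).mp (mem_zpowers x))
  have := (Commute.conj_iff n).mpr
    (Commute.zpow_right (mem_centralizer_singleton_iff.mp hc : Commute c x) k)
  rw [hk] at this
  exact mem_centralizer_singleton_iff.mpr
    (by simpa [mul_assoc] using this : Commute (n * c * n⁻¹) x)

def CardNormalizerDvdCardSolubilizer (G : Type*) [Group G] : Prop :=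
  ∀ x : G, Nat.card (normalizer (zpowers x : Set G)) ∣ Nat.card (solubilizer G x)

theorem CardNormalizerDvdCardSolubilizer.card_inf_dvd {H : Subgroup G}
    (h : CardNormalizerDvdCardSolubilizer H) {x : G} (hx : x ∈ H) :
    Nat.card ↥(normalizer (zpowers x : Set G) ⊓ H) ∣ Nat.card ↥(solubilizer G x ∩ H) := by
  rw [← card_normalizer_zpowers_subgroup hx, ← card_solubilizer_subgroup hx]
  exact h ⟨x, hx⟩

theorem card_normalizer_dvd_numConjOrbits_mul_card_iff [Finite G] (x : G)
    (h : ∀ c ∈ centralizer {x}, c ≠ 1 → CardNormalizerDvdCardSolubilizer (centralizer {c})) :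
    Nat.card (normalizer (zpowers x : Set G)) ∣
        numConjOrbits (centralizer {x}) (solubilizer G x) * Nat.card (centralizer {x}) ↔
      Nat.card (normalizer (zpowers x : Set G)) ∣ Nat.card (solubilizer G x) := by
  classical
  have := Fintype.ofFinite G
  let s : Finset G := {c | c ∈ centralizer {x}}
  have hs (c : G) : c ∈ s ↔ c ∈ centralizer {x} := by simp [s]
  have hburnside : numConjOrbits (centralizer {x}) (solubilizer G x) * Nat.card (centralizer {x})
      = Nat.card (solubilizer G x) +
        ∑ c ∈ s.erase 1, Nat.card ↥(solubilizer G x ∩ centralizer {c}) := by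
    rw [numConjOrbits_mul_card _ _ fun c hc y =>
        (conj_mem_solubilizer_iff (centralizer_le_normalizer_zpowers x hc)).mpr,
      ← Finset.sum_subtype s hs (fun c => Nat.card ↥(solubilizer G x ∩ centralizer {c})),
      ← Finset.add_sum_erase s _ ((hs 1).mpr (one_mem _)),
      centralizer_eq_top_iff_subset.mpr (Set.singleton_subset_iff.mpr (one_mem _)),
      coe_top, Set.inter_univ]
  have hdvd := card_dvd_sum_of_conj_invariant _ (s.erase 1)
    (fun n hn c hc => by
      rw [Finset.mem_erase, hs] at hc ⊢
      exact ⟨by simpa using hc.1, conj_mem_centralizer_of_mem_normalizer hn hc.2⟩)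
    (fun c => Nat.card ↥(solubilizer G x ∩ centralizer {c}))
    (fun n hn c _ => card_solubilizer_inter_centralizer_conj hn c)
    (fun c hc => by
      rw [Finset.mem_erase, hs] at hc
      exact (h c hc.2 hc.1).card_inf_dvd
        (mem_centralizer_singleton_iff.mpr (mem_centralizer_singleton_iff.mp hc.2).symm))
  rw [hburnside]
  exact Nat.dvd_add_left hdvd

theorem card_solubilizer_eq_card_center_mul (x : G) :
    Nat.card (solubilizer G x) =
      Nat.card (center G) * Nat.card (solubilizer (G ⧸ center G) x) := by
  have : solubilizer G x = QuotientGroup.mk ⁻¹' solubilizer (G ⧸ center G) x := by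
    ext y
    exact (map_mem_solubilizer_iff _ (QuotientGroup.ker_mk' (center G)).le).symm
  rw [this, QuotientGroup.card_preimage_mk]

theorem card_normalizer_zpowers_eq_card_center_mul (x : G) :
    Nat.card (normalizer (zpowers x : Set G)) =
      Nat.card (center G) *
        Nat.card ((normalizer (zpowers x : Set G)).map (QuotientGroup.mk' (center G))) := by
  have hZ : center G ≤ normalizer (zpowers x : Set G) :=
    (center_le_centralizer _).trans (centralizer_le_normalizer_zpowers x)
  conv_lhs => rw [← comap_map_eq_self (f := QuotientGroup.mk' (center G))
    ((QuotientGroup.ker_mk' (center G)).trans_le hZ)]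
  exact QuotientGroup.card_preimage_mk (center G)
    ((normalizer (zpowers x : Set G)).map (QuotientGroup.mk' (center G)) : Set (G ⧸ center G))

theorem map_normalizer_zpowers_le {G' : Type*} [Group G'] (f : G →* G') (x : G) :
    (normalizer (zpowers x : Set G)).map f ≤ normalizer (zpowers (f x) : Set G') := by
  rw [← MonoidHom.map_zpowers]
  exact le_normalizer_map f

theorem CardNormalizerDvdCardSolubilizer.of_quotient_center
    (h : CardNormalizerDvdCardSolubilizer (G ⧸ center G)) :
    CardNormalizerDvdCardSolubilizer G := fun x => by
  rw [card_normalizer_zpowers_eq_card_center_mul, card_solubilizer_eq_card_center_mul]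
  exact mul_dvd_mul_left _ ((card_dvd_of_le (map_normalizer_zpowers_le _ x)).trans (h x))

theorem exists_int_div_mul_eq_iff_dvd {a b c : ℕ} (hb : b ≠ 0) :
    (∃ k : ℤ, (a / b : ℚ) * c = k) ↔ b ∣ c * a := by
  constructor
  · rintro ⟨k, hk⟩
    have hb' : (b : ℚ) ≠ 0 := by exact_mod_cast hb
    field_simp at hk
    exact Int.natCast_dvd_natCast.mp ⟨k, by push_cast; rw [mul_comm]; exact_mod_cast hk⟩
  · rintro ⟨m, hm⟩
    refine ⟨m, ?_⟩
    field_simp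
    exact_mod_cast (by rw [mul_comm, hm] : a * c = b * m)

theorem card_quotient_center_lt [Finite G] (h : center G ≠ ⊥) :
    Nat.card (G ⧸ center G) < Nat.card G := by
  rw [card_eq_card_quotient_mul_card_subgroup (center G)]
  exact lt_mul_of_one_lt_right Nat.card_pos ((one_lt_card_iff_ne_bot _).mpr h)

theorem card_centralizer_lt [Finite G] (h : center G = ⊥) {c : G} (hc : c ≠ 1) :
    Nat.card (centralizer {c}) < Nat.card G := by
  refine (card_le_card_group _).lt_of_ne fun heq => hc ?_
  simpa [h] using centralizer_eq_top_iff_subset.mp ((card_eq_iff_eq_top _).mp heq)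

theorem stmt11 :
    (∀ (G : Type) (_ : Group G) (_ : Finite G) (x : G),
      Nat.card (Subgroup.normalizer (Subgroup.zpowers x : Set G)) ∣ Nat.card (solubilizer G x)) ↔
    (∀ (G : Type) (_ : Group G) (_ : Finite G) (x : G),
      ∃ k : ℤ,
        ((Nat.card (Subgroup.centralizer {x}) : ℚ) /
            (Nat.card (Subgroup.normalizer (Subgroup.zpowers x : Set G)) : ℚ)) *
          (numConjOrbits (Subgroup.centralizer {x}) (solubilizer G x) : ℚ) = k) := by
  constructor
  · intro h G _ _ x
    rw [exists_int_div_mul_eq_iff_dvd Nat.card_pos.ne']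
    exact (card_normalizer_dvd_numConjOrbits_mul_card_iff x fun c _ _ =>
      h _ _ inferInstance).mpr (h G _ inferInstance x)
  · intro h G _ _
    induction hn : Nat.card G using Nat.strong_induction_on generalizing G with
    | _ n ih =>
      by_cases hZ : center G = ⊥
      · exact fun x => (card_normalizer_dvd_numConjOrbits_mul_card_iff x fun c _ hc =>
          ih _ (hn ▸ card_centralizer_lt hZ hc) _ _ inferInstance rfl).mp
          ((exists_int_div_mul_eq_iff_dvd Nat.card_pos.ne').mp (h G _ inferInstance x))
      · exact CardNormalizerDvdCardSolubilizer.of_quotient_center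
          (ih _ (hn ▸ card_quotient_center_lt hZ) _ _ inferInstance rfl)
end
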